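/- arXiv:2312.02024 — 6 statements merged into one kernel-verified Lean document; each statement's English description precedes it below -/
import Mathlib

section
/- Let A, B, C, P be four points in the Euclidean plane such that A, B, C are affinely independent and each of the triples (B, P, C), (C, P, A), (A, P, B) is affinely independent. Let H_A, H_B, H_C denote the orthocenters of triangles BPC, CPA, APB respectively, and assume each of the triples (A, H_B, H_C), (B, H_C, H_A), (C, H_A, H_B) is affinely independent. Then there exists a point X lying simultaneously on the circumcircle of triangle A H_B H_C, the circumcircle of triangle B H_C H_A, and the circumcircle of triangle C H_A H_B (i.e., the distance from X to the circumcenter of each of these triangles equals the corresponding circumradius). -/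
open EuclideanGeometry
open scoped InnerProductSpace

/-- The orthocenter of the triangle with vertices `A`, `B`, `C`. -/
noncomputable def orthocenter3 (A B C : EuclideanSpace ℝ (Fin 2))
    (h : AffineIndependent ℝ ![A, B, C]) : EuclideanSpace ℝ (Fin 2) :=
  Affine.Triangle.orthocenter ⟨![A, B, C], h⟩

/-- The circumcenter of the triangle with vertices `A`, `B`, `C`. -/
noncomputable def circumcenter3 (A B C : EuclideanSpace ℝ (Fin 2))
    (h : AffineIndependent ℝ ![A, B, C]) : EuclideanSpace ℝ (Fin 2) :=
  Affine.Simplex.circumcenter ⟨![A, B, C], h⟩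

/-- The circumradius of the triangle with vertices `A`, `B`, `C`. -/
noncomputable def circumradius3 (A B C : EuclideanSpace ℝ (Fin 2))
    (h : AffineIndependent ℝ ![A, B, C]) : ℝ :=
  Affine.Simplex.circumradius ⟨![A, B, C], h⟩

/-!
All angles are directed and taken modulo `π`. Since `H_A B ⊥ CP` and `H_C B ⊥ AP`, the angle
`∡ H_A B H_C` equals `∡ C P A`; cyclically, `∡ H_C A H_B = ∡ B P C` and `∡ H_B C H_A = ∡ A P B`,
so these three angles sum to `0`. That is the condition of Miquel's theorem for the triangle
`H_A H_B H_C` and the points `A`, `B`, `C`: the second intersection `X` of the circles `A H_B H_C`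
and `B H_C H_A` satisfies `∡ H_A X H_B = ∡ H_A B H_C + ∡ H_C A H_B = ∡ H_A C H_B`, so it lies on
the third circle. When the first two circles are tangent at `H_C` (their centres are collinear
with `H_C`), the same chase with the common tangent in place of `X` puts `H_C` on the third circle.
-/

open Real

namespace Orientation

variable {V : Type*} [NormedAddCommGroup V] [InnerProductSpace ℝ V]
  [Fact (Module.finrank ℝ V = 2)] (o : Orientation ℝ V (Fin 2))

theorem two_zsmul_oangle_eq_pi_of_inner_eq_zero {x y : V} (hx : x ≠ 0) (hy : y ≠ 0)
    (h : ⟪x, y⟫_ℝ = 0) : (2 : ℤ) • o.oangle x y = π := by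
  rcases o.eq_zero_or_oangle_eq_iff_inner_eq_zero.2 h with h | h | h
  · exact absurd h hx
  · exact absurd h hy
  · exact Real.Angle.two_zsmul_eq_pi_iff.2 h

theorem two_zsmul_oangle_eq_of_inner_eq_zero {x y z w : V} (hx : x ≠ 0) (hy : y ≠ 0)
    (hz : z ≠ 0) (hw : w ≠ 0) (hxz : ⟪x, z⟫_ℝ = 0) (hyw : ⟪y, w⟫_ℝ = 0) :
    (2 : ℤ) • o.oangle x y = (2 : ℤ) • o.oangle z w := by
  have hxz' := o.two_zsmul_oangle_eq_pi_of_inner_eq_zero hx hz hxz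
  have hwy' := o.two_zsmul_oangle_eq_pi_of_inner_eq_zero hw hy (real_inner_comm y w ▸ hyw)
  rw [← o.oangle_add hx hz hy, ← o.oangle_add hz hw hy, smul_add, smul_add, hxz', hwy',
    add_left_comm, Real.Angle.coe_pi_add_coe_pi, add_zero]

end Orientation

namespace Affine.Triangle

variable {V P : Type*} [NormedAddCommGroup V] [InnerProductSpace ℝ V] [MetricSpace P]
  [NormedAddTorsor V P]

theorem inner_orthocenter_vsub_vsub (t : Triangle ℝ P) {i₁ i₂ i₃ : Fin 3} (h₁₂ : i₁ ≠ i₂)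
    (h₁₃ : i₁ ≠ i₃) (h₂₃ : i₂ ≠ i₃) :
    ⟪t.orthocenter -ᵥ t.points i₁, t.points i₂ -ᵥ t.points i₃⟫_ℝ = 0 := by
  have hs : ({i₂, i₃}ᶜ : Finset (Fin 3)) = {i₁} := by decide +revert
  simpa [hs, orthocenter_eq_mongePoint] using
    t.inner_mongePoint_vsub_face_centroid_vsub (i₁ := i₂) (i₂ := i₃)

end Affine.Triangle

namespace EuclideanGeometry

variable {V P : Type*} [NormedAddCommGroup V] [InnerProductSpace ℝ V] [MetricSpace P]
  [NormedAddTorsor V P]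

theorem Sphere.exists_mem_mem_ne_of_not_collinear {s₁ s₂ : Sphere P} {r : P} (h₁ : r ∈ s₁)
    (h₂ : r ∈ s₂) (h : ¬Collinear ℝ {r, s₁.center, s₂.center}) :
    ∃ x, x ∈ s₁ ∧ x ∈ s₂ ∧ x ≠ r := by
  refine ⟨reflection line[ℝ, s₁.center, s₂.center] r, ?_, ?_, ?_⟩
  · rwa [mem_sphere', dist_reflection_eq_of_mem _ (left_mem_affineSpan_pair ℝ _ _),
      ← mem_sphere']
  · rwa [mem_sphere', dist_reflection_eq_of_mem _ (right_mem_affineSpan_pair ℝ _ _),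
      ← mem_sphere']
  · rw [Ne, reflection_eq_self_iff]
    exact fun hr ↦ h (collinear_insert_of_mem_affineSpan_pair hr)

variable [Fact (Module.finrank ℝ V = 2)] [Module.Oriented ℝ V (Fin 2)]

theorem two_zsmul_oangle_eq_of_inner_vsub_eq_zero {p₁ p₂ p₃ q₁ q₂ q₃ : P} (hp₁ : p₁ ≠ p₂)
    (hp₃ : p₃ ≠ p₂) (hq₁ : q₁ ≠ q₂) (hq₃ : q₃ ≠ q₂) (h₁ : ⟪p₁ -ᵥ p₂, q₁ -ᵥ q₂⟫_ℝ = 0)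
    (h₃ : ⟪p₃ -ᵥ p₂, q₃ -ᵥ q₂⟫_ℝ = 0) : (2 : ℤ) • ∡ p₁ p₂ p₃ = (2 : ℤ) • ∡ q₁ q₂ q₃ :=
  Module.Oriented.positiveOrientation.two_zsmul_oangle_eq_of_inner_eq_zero (vsub_ne_zero.2 hp₁)
    (vsub_ne_zero.2 hp₃) (vsub_ne_zero.2 hq₁) (vsub_ne_zero.2 hq₃) h₁ h₃

theorem two_zsmul_oangle_eq_of_eq_orthocenter {a b c p x y : P}
    (hbpc : AffineIndependent ℝ ![b, p, c]) (hapb : AffineIndependent ℝ ![a, p, b])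
    (hx : x = Affine.Triangle.orthocenter ⟨_, hbpc⟩)
    (hy : y = Affine.Triangle.orthocenter ⟨_, hapb⟩) (hxb : x ≠ b) (hyb : y ≠ b) :
    (2 : ℤ) • ∡ x b y = (2 : ℤ) • ∡ c p a := by
  subst hx hy
  exact two_zsmul_oangle_eq_of_inner_vsub_eq_zero hxb hyb
    (hbpc.injective.ne (by decide : (2 : Fin 3) ≠ 1))
    (hapb.injective.ne (by decide : (0 : Fin 3) ≠ 1))
    (Affine.Triangle.inner_orthocenter_vsub_vsub _ (i₁ := 0) (i₂ := 2) (i₃ := 1)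
      (by decide) (by decide) (by decide))
    (Affine.Triangle.inner_orthocenter_vsub_vsub _ (i₁ := 2) (i₂ := 0) (i₃ := 1)
      (by decide) (by decide) (by decide))

namespace Sphere

theorem two_zsmul_oangle_eq_add_of_mem {s₁ s₂ : Sphere P} {a b p q r x : P} (ha : a ∈ s₁)
    (hq : q ∈ s₁) (hr₁ : r ∈ s₁) (hx₁ : x ∈ s₁) (hb : b ∈ s₂) (hr₂ : r ∈ s₂) (hp : p ∈ s₂)
    (hx₂ : x ∈ s₂) (haq : a ≠ q) (har : a ≠ r) (hbr : b ≠ r) (hbp : b ≠ p) (hxp : x ≠ p)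
    (hxq : x ≠ q) (hxr : x ≠ r) :
    (2 : ℤ) • ∡ p x q = (2 : ℤ) • ∡ p b r + (2 : ℤ) • ∡ r a q := by
  rw [← oangle_add hxp.symm hxr.symm hxq.symm, smul_add,
    two_zsmul_oangle_eq hp hx₂ hb hr₂ hxp hxr hbp hbr,
    two_zsmul_oangle_eq hr₁ hx₁ ha hq hxr hxq har haq]

theorem two_zsmul_oangle_eq_add_of_collinear_center {s₁ s₂ : Sphere P} {a b p q r : P}
    (ha : a ∈ s₁) (hq : q ∈ s₁) (hr₁ : r ∈ s₁) (hb : b ∈ s₂) (hr₂ : r ∈ s₂) (hp : p ∈ s₂)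
    (haq : a ≠ q) (har : a ≠ r) (hbr : b ≠ r) (hbp : b ≠ p) (hpr : p ≠ r) (hqr : q ≠ r)
    (h : Collinear ℝ {r, s₁.center, s₂.center}) :
    (2 : ℤ) • ∡ p r q = (2 : ℤ) • ∡ p b r + (2 : ℤ) • ∡ r a q := by
  have hc₁ := (ne_center_of_mem_of_mem_of_ne hr₁ ha har.symm).symm
  have hc₂ := (ne_center_of_mem_of_mem_of_ne hr₂ hb hbr.symm).symm
  have e₁ := two_zsmul_oangle_center_add_two_zsmul_oangle_eq_pi hr₁ ha hq har haq hqr.symm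
  have e₂ := two_zsmul_oangle_center_add_two_zsmul_oangle_eq_pi hr₂ hb hp hbr hbp hpr.symm
  have hcol : Collinear ℝ {s₂.center, r, s₁.center} := by
    convert h using 1; grind
  rw [← oangle_add hpr hc₂ hqr, smul_add, hcol.two_zsmul_oangle_eq_left hc₂ hc₁,
    oangle_rev q r, smul_neg, eq_sub_of_add_eq e₁, eq_sub_of_add_eq e₂, oangle_rev p b r,
    smul_neg]
  abel

end Sphere

open Affine in
theorem exists_mem_circumsphere_of_two_zsmul_oangle_add_eq_zero {a b c p q r : P}
    (h₁ : AffineIndependent ℝ ![a, q, r]) (h₂ : AffineIndependent ℝ ![b, r, p])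
    (h₃ : AffineIndependent ℝ ![c, p, q])
    (h : (2 : ℤ) • ∡ p b r + (2 : ℤ) • ∡ r a q + (2 : ℤ) • ∡ q c p = 0) :
    ∃ x, x ∈ (⟨_, h₁⟩ : Triangle ℝ P).circumsphere ∧ x ∈ (⟨_, h₂⟩ : Triangle ℝ P).circumsphere ∧
      x ∈ (⟨_, h₃⟩ : Triangle ℝ P).circumsphere := by
  set t₁ : Triangle ℝ P := ⟨_, h₁⟩
  set t₂ : Triangle ℝ P := ⟨_, h₂⟩
  set t₃ : Triangle ℝ P := ⟨_, h₃⟩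
  have ha : a ∈ t₁.circumsphere := t₁.mem_circumsphere 0
  have hq₁ : q ∈ t₁.circumsphere := t₁.mem_circumsphere 1
  have hr₁ : r ∈ t₁.circumsphere := t₁.mem_circumsphere 2
  have hb : b ∈ t₂.circumsphere := t₂.mem_circumsphere 0
  have hr₂ : r ∈ t₂.circumsphere := t₂.mem_circumsphere 1
  have hp₂ : p ∈ t₂.circumsphere := t₂.mem_circumsphere 2
  have haq : a ≠ q := h₁.injective.ne (by decide : (0 : Fin 3) ≠ 1)
  have har : a ≠ r := h₁.injective.ne (by decide : (0 : Fin 3) ≠ 2)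
  have hqr : q ≠ r := h₁.injective.ne (by decide : (1 : Fin 3) ≠ 2)
  have hbr : b ≠ r := h₂.injective.ne (by decide : (0 : Fin 3) ≠ 1)
  have hbp : b ≠ p := h₂.injective.ne (by decide : (0 : Fin 3) ≠ 2)
  have hrp : r ≠ p := h₂.injective.ne (by decide : (1 : Fin 3) ≠ 2)
  have hmem₃ : ∀ x, (2 : ℤ) • ∡ p x q = (2 : ℤ) • ∡ p b r + (2 : ℤ) • ∡ r a q →
      x ∈ t₃.circumsphere := by
    intro x hx
    refine t₃.mem_circumsphere_of_two_zsmul_oangle_eq (i₁ := 1) (i₂ := 0) (i₃ := 2)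
      (by decide) (by decide) (by decide) (hx.trans ?_)
    show _ = (2 : ℤ) • ∡ p c q
    rw [oangle_rev q c p, smul_neg]
    exact eq_neg_of_add_eq_zero_left h
  by_cases hcol : Collinear ℝ {r, t₁.circumsphere.center, t₂.circumsphere.center}
  · exact ⟨r, hr₁, hr₂, hmem₃ r (Sphere.two_zsmul_oangle_eq_add_of_collinear_center ha hq₁ hr₁
      hb hr₂ hp₂ haq har hbr hbp hrp.symm hqr hcol)⟩
  obtain ⟨x, hx₁, hx₂, hxr⟩ := Sphere.exists_mem_mem_ne_of_not_collinear hr₁ hr₂ hcol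
  rcases eq_or_ne x p with rfl | hxp
  · exact ⟨x, hx₁, hx₂, t₃.mem_circumsphere 1⟩
  rcases eq_or_ne x q with rfl | hxq
  · exact ⟨x, hx₁, hx₂, t₃.mem_circumsphere 2⟩
  exact ⟨x, hx₁, hx₂, hmem₃ x (Sphere.two_zsmul_oangle_eq_add_of_mem ha hq₁ hr₁ hx₁ hb hr₂ hp₂
    hx₂ haq har hbr hbp hxp hxq hxr)⟩

end EuclideanGeometry

theorem concurrent_circumcircles_general (A B C P HA HB HC : EuclideanSpace ℝ (Fin 2))
    (hBPC : AffineIndependent ℝ ![B, P, C])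
    (hCPA : AffineIndependent ℝ ![C, P, A])
    (hAPB : AffineIndependent ℝ ![A, P, B])
    (hHA : HA = orthocenter3 B P C hBPC)
    (hHB : HB = orthocenter3 C P A hCPA)
    (hHC : HC = orthocenter3 A P B hAPB)
    (h1 : AffineIndependent ℝ ![A, HB, HC])
    (h2 : AffineIndependent ℝ ![B, HC, HA])
    (h3 : AffineIndependent ℝ ![C, HA, HB]) :
    ∃ X : EuclideanSpace ℝ (Fin 2),
      dist X (circumcenter3 A HB HC h1) = circumradius3 A HB HC h1 ∧
      dist X (circumcenter3 B HC HA h2) = circumradius3 B HC HA h2 ∧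
      dist X (circumcenter3 C HA HB h3) = circumradius3 C HA HB h3 := by
  have : Fact (Module.finrank ℝ (EuclideanSpace ℝ (Fin 2)) = 2) := ⟨finrank_euclideanSpace_fin⟩
  let : Module.Oriented ℝ (EuclideanSpace ℝ (Fin 2)) (Fin 2) :=
    ⟨(EuclideanSpace.basisFun (Fin 2) ℝ).toBasis.orientation⟩
  have hAP : A ≠ P := hAPB.injective.ne (by decide : (0 : Fin 3) ≠ 1)
  have hBP : B ≠ P := hBPC.injective.ne (by decide : (0 : Fin 3) ≠ 1)
  have hCP : C ≠ P := hCPA.injective.ne (by decide : (0 : Fin 3) ≠ 1)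
  have hB := two_zsmul_oangle_eq_of_eq_orthocenter hBPC hAPB hHA hHC
    (h2.injective.ne (by decide : (2 : Fin 3) ≠ 0)) (h2.injective.ne (by decide : (1 : Fin 3) ≠ 0))
  have hA := two_zsmul_oangle_eq_of_eq_orthocenter hAPB hCPA hHC hHB
    (h1.injective.ne (by decide : (2 : Fin 3) ≠ 0)) (h1.injective.ne (by decide : (1 : Fin 3) ≠ 0))
  have hC := two_zsmul_oangle_eq_of_eq_orthocenter hCPA hBPC hHB hHA
    (h3.injective.ne (by decide : (2 : Fin 3) ≠ 0)) (h3.injective.ne (by decide : (1 : Fin 3) ≠ 0))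
  have hsum : (2 : ℤ) • ∡ HA B HC + (2 : ℤ) • ∡ HC A HB + (2 : ℤ) • ∡ HB C HA = 0 := by
    rw [hB, hA, hC, ← smul_add, ← smul_add, add_comm (∡ C P A), oangle_add_cyc3 hBP hCP hAP,
      smul_zero]
  exact exists_mem_circumsphere_of_two_zsmul_oangle_add_eq_zero h1 h2 h3 hsum

/-- The circumcircles of `A H_B H_C`, `B H_C H_A`, `C H_A H_B` have a common point. -/
theorem concurrent_circumcircles (A B C P HA HB HC : EuclideanSpace ℝ (Fin 2))
    (hABC : AffineIndependent ℝ ![A, B, C])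
    (hBPC : AffineIndependent ℝ ![B, P, C])
    (hCPA : AffineIndependent ℝ ![C, P, A])
    (hAPB : AffineIndependent ℝ ![A, P, B])
    (hHA : HA = orthocenter3 B P C hBPC)
    (hHB : HB = orthocenter3 C P A hCPA)
    (hHC : HC = orthocenter3 A P B hAPB)
    (h1 : AffineIndependent ℝ ![A, HB, HC])
    (h2 : AffineIndependent ℝ ![B, HC, HA])
    (h3 : AffineIndependent ℝ ![C, HA, HB]) :
    ∃ X : EuclideanSpace ℝ (Fin 2),
      dist X (circumcenter3 A HB HC h1) = circumradius3 A HB HC h1 ∧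
      dist X (circumcenter3 B HC HA h2) = circumradius3 B HC HA h2 ∧
      dist X (circumcenter3 C HA HB h3) = circumradius3 C HA HB h3 :=
  concurrent_circumcircles_general A B C P HA HB HC hBPC hCPA hAPB hHA hHB hHC h1 h2 h3
end

section
/- Let A, B, C, P be four points in the Euclidean plane such that A, B, C are affinely independent and each of the triples (B, P, C), (C, P, A), (A, P, B) is affinely independent. Let H_A, H_B, H_C denote the orthocenters of triangles BPC, CPA, APB respectively. Let G be the centroid of {A, B, C}, and let G_A, G_B, G_C be the centroids of {A, H_B, H_C}, {B, H_C, H_A}, {C, H_A, H_B} respectively. Then the vector G_A − G is orthogonal to the vector P − A, the vector G_B − G is orthogonal to the vector P − B, and the vector G_C − G is orthogonal to the vector P − C. -/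
open EuclideanGeometry
open scoped InnerProductSpace

/-! Each `G_X - G` is a third of the sum of two vectors `H - Y`, where `H` is the orthocenter
of a triangle with side `X P` and `Y` the vertex opposite that side; both are altitude vectors,
hence orthogonal to `P - X`. -/

section Altitude

variable {V P : Type*} [NormedAddCommGroup V] [InnerProductSpace ℝ V] [MetricSpace P]
  [NormedAddTorsor V P]

theorem Affine.Simplex.inner_vsub_vsub_of_mem_altitude {n : ℕ} (s : Affine.Simplex ℝ P n)
    {i j k : Fin (n + 1)} {p : P} (hp : p ∈ s.altitude i) (hj : j ≠ i) (hk : k ≠ i) :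
    ⟪p -ᵥ s.points i, s.points j -ᵥ s.points k⟫_ℝ = 0 := by
  rw [real_inner_comm]
  exact (s.vectorSpan_isOrtho_altitude_direction i).inner_eq
    (vsub_mem_vectorSpan ℝ ⟨j, hj, rfl⟩ ⟨k, hk, rfl⟩)
    (AffineSubspace.vsub_mem_direction hp (s.mem_altitude i))

theorem Affine.Triangle.inner_orthocenter_vsub_vsub_s2 {t : Affine.Triangle ℝ P}
    {i j k : Fin 3} (hj : j ≠ i) (hk : k ≠ i) :
    ⟪t.orthocenter -ᵥ t.points i, t.points j -ᵥ t.points k⟫_ℝ = 0 :=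
  t.inner_vsub_vsub_of_mem_altitude t.orthocenter_mem_altitude hj hk

end Altitude

theorem inner_orthocenter3_sub_left (X Y Z : EuclideanSpace ℝ (Fin 2))
    (h : AffineIndependent ℝ ![X, Y, Z]) : ⟪orthocenter3 X Y Z h - X, Y - Z⟫_ℝ = 0 :=
  Affine.Triangle.inner_orthocenter_vsub_vsub_s2 (t := ⟨![X, Y, Z], h⟩) (i := 0) (j := 1) (k := 2)
    (by decide) (by decide)

theorem inner_orthocenter3_sub_right (X Y Z : EuclideanSpace ℝ (Fin 2))
    (h : AffineIndependent ℝ ![X, Y, Z]) : ⟪orthocenter3 X Y Z h - Z, Y - X⟫_ℝ = 0 :=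
  Affine.Triangle.inner_orthocenter_vsub_vsub_s2 (t := ⟨![X, Y, Z], h⟩) (i := 2) (j := 1) (k := 0)
    (by decide) (by decide)

theorem inner_smul_add_sub_smul_add_eq_zero {E : Type*} [NormedAddCommGroup E]
    [InnerProductSpace ℝ E] {a b c u v d : E} (hu : ⟪u - c, d⟫_ℝ = 0) (hv : ⟪v - b, d⟫_ℝ = 0) :
    ⟪(3 : ℝ)⁻¹ • (a + u + v) - (3 : ℝ)⁻¹ • (a + b + c), d⟫_ℝ = 0 := by
  rw [show (3 : ℝ)⁻¹ • (a + u + v) - (3 : ℝ)⁻¹ • (a + b + c) = (3 : ℝ)⁻¹ • ((u - c) + (v - b))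
    by module, real_inner_smul_left, inner_add_left, hu, hv, add_zero, mul_zero]

theorem centroid_lines_perp_general (A B C P HA HB HC G GA GB GC : EuclideanSpace ℝ (Fin 2))
    (hBPC : AffineIndependent ℝ ![B, P, C])
    (hCPA : AffineIndependent ℝ ![C, P, A])
    (hAPB : AffineIndependent ℝ ![A, P, B])
    (hHA : HA = orthocenter3 B P C hBPC)
    (hHB : HB = orthocenter3 C P A hCPA)
    (hHC : HC = orthocenter3 A P B hAPB)
    (hG : G = (3 : ℝ)⁻¹ • (A + B + C))
    (hGA : GA = (3 : ℝ)⁻¹ • (A + HB + HC))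
    (hGB : GB = (3 : ℝ)⁻¹ • (B + HC + HA))
    (hGC : GC = (3 : ℝ)⁻¹ • (C + HA + HB)) :
    ⟪GA - G, P - A⟫_ℝ = 0 ∧ ⟪GB - G, P - B⟫_ℝ = 0 ∧ ⟪GC - G, P - C⟫_ℝ = 0 := by
  subst hHA hHB hHC hGA hGB hGC hG
  refine ⟨?_, ?_, ?_⟩
  · exact inner_smul_add_sub_smul_add_eq_zero (inner_orthocenter3_sub_left C P A hCPA)
      (inner_orthocenter3_sub_right A P B hAPB)
  · rw [add_rotate A B C]
    exact inner_smul_add_sub_smul_add_eq_zero (inner_orthocenter3_sub_left A P B hAPB)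
      (inner_orthocenter3_sub_right B P C hBPC)
  · rw [← add_rotate C A B]
    exact inner_smul_add_sub_smul_add_eq_zero (inner_orthocenter3_sub_left B P C hBPC)
      (inner_orthocenter3_sub_right C P A hCPA)

/-- `G G_A ⊥ AP`, `G G_B ⊥ BP`, `G G_C ⊥ CP`. -/
theorem centroid_lines_perp (A B C P HA HB HC G GA GB GC : EuclideanSpace ℝ (Fin 2))
    (hABC : AffineIndependent ℝ ![A, B, C])
    (hBPC : AffineIndependent ℝ ![B, P, C])
    (hCPA : AffineIndependent ℝ ![C, P, A])
    (hAPB : AffineIndependent ℝ ![A, P, B])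
    (hHA : HA = orthocenter3 B P C hBPC)
    (hHB : HB = orthocenter3 C P A hCPA)
    (hHC : HC = orthocenter3 A P B hAPB)
    (hG : G = (3 : ℝ)⁻¹ • (A + B + C))
    (hGA : GA = (3 : ℝ)⁻¹ • (A + HB + HC))
    (hGB : GB = (3 : ℝ)⁻¹ • (B + HC + HA))
    (hGC : GC = (3 : ℝ)⁻¹ • (C + HA + HB)) :
    ⟪GA - G, P - A⟫_ℝ = 0 ∧ ⟪GB - G, P - B⟫_ℝ = 0 ∧ ⟪GC - G, P - C⟫_ℝ = 0 :=
  centroid_lines_perp_general A B C P HA HB HC G GA GB GC hBPC hCPA hAPB hHA hHB hHC hG hGA hGB hGC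
end

section
/- Let A, B, C, P be four points in the Euclidean plane such that A, B, C are affinely independent and each of the triples (B, P, C), (C, P, A), (A, P, B) is affinely independent. Let H_A, H_B, H_C denote the orthocenters of triangles BPC, CPA, APB respectively. Let G be the centroid of {A, B, C}, and let G_A, G_B, G_C be the centroids of {A, H_B, H_C}, {B, H_C, H_A}, {C, H_A, H_B} respectively. Then the four points G, G_A, G_B, G_C are concyclic. -/
open EuclideanGeometry
open scoped InnerProductSpace

/-
Let `O_A, O_B, O_C` be the circumcenters of `BPC, CPA, APB`, so that `H_A = B + P + C - 2 O_A`
and cyclically. Both `O_B` and `O_C` lie on the perpendicular bisector of `AP`. If `O` is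
equidistant from `O_B` and `O_C`, the reflection `O_B + O_C - O` of `O` in the midpoint of
`O_B O_C` is, in the plane, also its mirror image in the line `O_B O_C`, hence lies at distance
`|OP|` from `A`. Taking for `O` the circumcenter of `O_A O_B O_C` (the three perpendicular
bisectors of `PA, PB, PC` are pairwise non-parallel, so they are concurrent or bound a triangle),
`G_A - (G + 2/3 (P - O)) = 2/3 (A - (O_B + O_C - O))`, and likewise for `G_B, G_C, G`: all four
points lie on the circle with center `G + 2/3 (P - O)` and radius `2/3 |OP|`.
-/

open Module AffineSubspace

section Plane

variable {V : Type*} [NormedAddCommGroup V] [InnerProductSpace ℝ V]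

theorem exists_eq_smul_of_inner_eq_zero (hV : finrank ℝ V = 2) {d x y : V} (hd : d ≠ 0)
    (hx : x ≠ 0) (hdx : ⟪d, x⟫_ℝ = 0) (hdy : ⟪d, y⟫_ℝ = 0) : ∃ t : ℝ, y = t • x := by
  have : Fact (finrank ℝ V = 1 + 1) := ⟨hV⟩
  let x' : (ℝ ∙ d)ᗮ := ⟨x, Submodule.mem_orthogonal_singleton_iff_inner_right.mpr hdx⟩
  let y' : (ℝ ∙ d)ᗮ := ⟨y, Submodule.mem_orthogonal_singleton_iff_inner_right.mpr hdy⟩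
  obtain ⟨t, ht⟩ := (finrank_eq_one_iff_of_nonzero' x' (by simpa [x'] using hx)).mp
    (Submodule.finrank_orthogonal_span_singleton hd) y'
  exact ⟨t, (congrArg Subtype.val ht).symm⟩

theorem dist_add_sub_eq_dist_of_mem_perpBisector (hV : finrank ℝ V = 2) {O U W A P : V}
    (hU : U ∈ perpBisector A P) (hW : W ∈ perpBisector A P) (hO : dist O U = dist O W)
    (hUW : U ≠ W) (hAP : A ≠ P) : dist (U + W - O) A = dist O P := by
  have hperp : ⟪W - U, P - A⟫_ℝ = 0 := by
    simpa using inner_vsub_vsub_of_dist_eq_of_dist_eq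
      ((mem_perpBisector_iff_dist_eq').mp hU) ((mem_perpBisector_iff_dist_eq').mp hW)
  have hmid : ⟪W - U, U + W - 2 • O⟫_ℝ = 0 := by
    have := (real_inner_add_sub_eq_zero_iff (U - O) (W - O)).mpr
      (by rw [← dist_eq_norm, ← dist_eq_norm, dist_comm, hO, dist_comm])
    rw [show W - U = -((U - O) - (W - O)) by abel, show U + W - 2 • O = (U - O) + (W - O) by
      module, inner_neg_left, real_inner_comm, this, neg_zero]
  obtain ⟨t, ht⟩ := exists_eq_smul_of_inner_eq_zero hV (sub_ne_zero.mpr hUW.symm)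
    (sub_ne_zero.mpr hAP.symm) hperp hmid
  rw [mem_perpBisector_iff_inner_eq, dist_eq_norm', vsub_eq_sub, vsub_eq_sub] at hU hW
  have hsum : 2 * ⟪O - A, P - A⟫_ℝ + t * ‖P - A‖ ^ 2 = ‖P - A‖ ^ 2 := by
    have hUW' : U - A + (W - A) = (2 : ℝ) • (O - A) + t • (P - A) := by
      rw [← ht]; module
    calc 2 * ⟪O - A, P - A⟫_ℝ + t * ‖P - A‖ ^ 2 = ⟪(2 : ℝ) • (O - A) + t • (P - A), P - A⟫_ℝ := by
          rw [inner_add_left, real_inner_smul_left, real_inner_smul_left,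
            real_inner_self_eq_norm_sq]
      _ = ‖P - A‖ ^ 2 := by rw [← hUW', inner_add_left, hU, hW]; ring
  have hX : U + W - O - A = (O - A) + t • (P - A) := by rw [← ht]; module
  have hY : O - P = (O - A) - (P - A) := by abel
  rw [dist_eq_norm, dist_eq_norm, hX, hY, ← sq_eq_sq₀ (norm_nonneg _) (norm_nonneg _),
    norm_add_sq_real, norm_sub_sq_real (O - A), inner_smul_right, norm_smul, mul_pow,
    Real.norm_eq_abs, sq_abs]
  linear_combination (t + 1) * hsum

theorem eq_of_mem_perpBisector_of_mem_perpBisector (hV : finrank ℝ V = 2) {X Y B C P : V}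
    (hXB : X ∈ perpBisector B P) (hXC : X ∈ perpBisector C P) (hYB : Y ∈ perpBisector B P)
    (hYC : Y ∈ perpBisector C P) (hBPC : ¬Collinear ℝ {B, P, C}) : X = Y := by
  have : FiniteDimensional ℝ V := Module.finite_of_finrank_pos (by omega)
  by_contra hXY
  rw [mem_perpBisector_iff_dist_eq'] at hXB hXC hYB hYC
  rcases eq_of_dist_eq_of_dist_eq_of_finrank_eq_two hV hXY (ne₁₂_of_not_collinear hBPC)
    hXB rfl hXC hYB rfl hYC with h | h
  · exact ne₁₃_of_not_collinear hBPC h.symm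
  · exact ne₂₃_of_not_collinear hBPC h.symm

theorem affineIndependent_of_mem_perpBisector (hV : finrank ℝ V = 2) {A C P X Y Z : V}
    (hXC : X ∈ perpBisector C P) (hYC : Y ∈ perpBisector C P) (hYA : Y ∈ perpBisector A P)
    (hZA : Z ∈ perpBisector A P) (hXY : X ≠ Y) (hYZ : Y ≠ Z) (hCPA : ¬Collinear ℝ {C, P, A}) :
    AffineIndependent ℝ ![X, Y, Z] := by
  rw [affineIndependent_iff_not_collinear_set]
  intro hXYZ
  obtain ⟨v, hv⟩ := (collinear_iff_of_mem (by simp : X ∈ ({X, Y, Z} : Set V))).mp hXYZ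
  obtain ⟨r, rfl⟩ := hv Y (by simp)
  obtain ⟨s, rfl⟩ := hv Z (by simp)
  rw [mem_perpBisector_iff_dist_eq'] at hXC hYC hYA hZA
  have hr : r ≠ 0 := by rintro rfl; simp at hXY
  have hsr : s - r ≠ 0 := sub_ne_zero.mpr (by rintro rfl; exact hYZ rfl)
  have hv0 : v ≠ 0 := by rintro rfl; simp at hXY
  have hvC : ⟪v, P - C⟫_ℝ = 0 := by
    simpa [real_inner_smul_left, hr] using inner_vsub_vsub_of_dist_eq_of_dist_eq hXC hYC
  have hvA : ⟪v, P - A⟫_ℝ = 0 := by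
    have := inner_vsub_vsub_of_dist_eq_of_dist_eq hYA hZA
    rw [vadd_vsub_vadd_cancel_right, ← sub_smul, real_inner_smul_left] at this
    simpa [hsr] using this
  obtain ⟨t, ht⟩ := exists_eq_smul_of_inner_eq_zero hV hv0
    (sub_ne_zero.mpr (ne₂₃_of_not_collinear hCPA)) hvA hvC
  apply hCPA
  rw [collinear_iff_of_mem (by simp : P ∈ ({C, P, A} : Set V))]
  refine ⟨P - A, ?_⟩
  simp only [Set.mem_insert_iff, Set.mem_singleton_iff, forall_eq_or_imp, forall_eq]
  refine ⟨⟨-t, ?_⟩, ⟨0, by simp⟩, ⟨-1, by simp⟩⟩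
  rw [vadd_eq_add, neg_smul, ← ht]; abel

theorem exists_dist_add_sub_eq_dist (hV : finrank ℝ V = 2) {A B C P OA OB OC : V}
    (hBPC : ¬Collinear ℝ {B, P, C}) (hCPA : ¬Collinear ℝ {C, P, A})
    (hAPB : ¬Collinear ℝ {A, P, B})
    (hOAB : OA ∈ perpBisector B P) (hOAC : OA ∈ perpBisector C P)
    (hOBC : OB ∈ perpBisector C P) (hOBA : OB ∈ perpBisector A P)
    (hOCA : OC ∈ perpBisector A P) (hOCB : OC ∈ perpBisector B P) :
    ∃ O : V, dist (OB + OC - O) A = dist O P ∧ dist (OC + OA - O) B = dist O P ∧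
      dist (OA + OB - O) C = dist O P := by
  rcases eq_or_ne OA OB with rfl | hAB
  · obtain rfl : OA = OC :=
      eq_of_mem_perpBisector_of_mem_perpBisector hV hOBA hOAB hOCA hOCB hAPB
    refine ⟨OA, ?_, ?_, ?_⟩ <;> rw [add_sub_cancel_right, ← mem_perpBisector_iff_dist_eq] <;>
      assumption
  have hBC : OB ≠ OC := by
    rintro rfl
    exact hAB (eq_of_mem_perpBisector_of_mem_perpBisector hV hOAB hOAC hOCB hOBC hBPC)
  have hCA : OC ≠ OA := by
    rintro rfl
    exact hAB (eq_of_mem_perpBisector_of_mem_perpBisector hV hOAC hOCA hOBC hOBA hCPA)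
  let T : Affine.Triangle ℝ V :=
    ⟨![OA, OB, OC], affineIndependent_of_mem_perpBisector hV hOAC hOBC hOBA hOCA hAB hBC hCPA⟩
  have hA : dist OA T.circumcenter = T.circumradius := T.dist_circumcenter_eq_circumradius 0
  have hB : dist OB T.circumcenter = T.circumradius := T.dist_circumcenter_eq_circumradius 1
  have hC : dist OC T.circumcenter = T.circumradius := T.dist_circumcenter_eq_circumradius 2
  rw [dist_comm] at hA hB hC
  refine ⟨T.circumcenter, ?_, ?_, ?_⟩
  · exact dist_add_sub_eq_dist_of_mem_perpBisector hV hOBA hOCA (hB.trans hC.symm) hBC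
      (ne₂₃_of_not_collinear hCPA).symm
  · exact dist_add_sub_eq_dist_of_mem_perpBisector hV hOCB hOAB (hC.trans hA.symm) hCA
      (ne₁₂_of_not_collinear hBPC)
  · exact dist_add_sub_eq_dist_of_mem_perpBisector hV hOAC hOBC (hA.trans hB.symm) hAB
      (ne₂₃_of_not_collinear hBPC).symm

theorem Finset.univ_centroid_fin_three (X Y Z : V) :
    (Finset.univ : Finset (Fin 3)).centroid ℝ ![X, Y, Z] = (3 : ℝ)⁻¹ • (X + Y + Z) := by
  rw [Finset.centroid_def, Finset.affineCombination_eq_linear_combination _ _ _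
    (by simp [Finset.centroidWeights])]
  simp [Fin.sum_univ_three, Finset.centroidWeights]

theorem cospherical_centroids {A B C P OA OB OC O HA HB HC : V}
    (hHA : HA = B + P + C - 2 • OA) (hHB : HB = C + P + A - 2 • OB)
    (hHC : HC = A + P + B - 2 • OC) (hA : dist (OB + OC - O) A = dist O P)
    (hB : dist (OC + OA - O) B = dist O P) (hC : dist (OA + OB - O) C = dist O P) :
    Cospherical ({(3 : ℝ)⁻¹ • (A + B + C), (3 : ℝ)⁻¹ • (A + HB + HC),
      (3 : ℝ)⁻¹ • (B + HC + HA), (3 : ℝ)⁻¹ • (C + HA + HB)} : Set V) := by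
  subst hHA hHB hHC
  set Z := (3 : ℝ)⁻¹ • (A + B + C) + (2 / 3 : ℝ) • (P - O)
  have dist_center {X Y W : V} (hXZ : X - Z = (2 / 3 : ℝ) • (Y - W))
      (hWY : dist W Y = dist O P) : dist X Z = 2 / 3 * dist O P := by
    rw [dist_eq_norm, hXZ, norm_smul, ← dist_eq_norm, dist_comm, hWY, Real.norm_of_nonneg]
    positivity
  refine ⟨Z, 2 / 3 * dist O P, ?_⟩
  simp only [Set.mem_insert_iff, Set.mem_singleton_iff, forall_eq_or_imp, forall_eq]
  refine ⟨dist_center (Y := O) (W := P) (by module) (dist_comm _ _), dist_center (by module) hA,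
    dist_center (by module) hB, dist_center (by module) hC⟩

end Plane

theorem orthocenter3_eq (X Y Z : EuclideanSpace ℝ (Fin 2)) (h : AffineIndependent ℝ ![X, Y, Z]) :
    orthocenter3 X Y Z h = X + Y + Z - 2 • circumcenter3 X Y Z h := by
  rw [orthocenter3, circumcenter3, Affine.Triangle.orthocenter_eq_smul_vsub_vadd_circumcenter]
  rw [Affine.Simplex.points, Finset.univ_centroid_fin_three, vsub_eq_sub, vadd_eq_add]
  module

theorem circumcenter3_mem_perpBisector (X Y Z : EuclideanSpace ℝ (Fin 2))
    (h : AffineIndependent ℝ ![X, Y, Z]) :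
    circumcenter3 X Y Z h ∈ perpBisector X Y ∧ circumcenter3 X Y Z h ∈ perpBisector Z Y := by
  let T : Affine.Triangle ℝ (EuclideanSpace ℝ (Fin 2)) := ⟨![X, Y, Z], h⟩
  simp only [mem_perpBisector_iff_dist_eq']
  exact ⟨(T.dist_circumcenter_eq_circumradius 0).trans (T.dist_circumcenter_eq_circumradius 1).symm,
    (T.dist_circumcenter_eq_circumradius 2).trans (T.dist_circumcenter_eq_circumradius 1).symm⟩

theorem concyclic_centroids_general (A B C P HA HB HC G GA GB GC : EuclideanSpace ℝ (Fin 2))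
    (hBPC : AffineIndependent ℝ ![B, P, C])
    (hCPA : AffineIndependent ℝ ![C, P, A])
    (hAPB : AffineIndependent ℝ ![A, P, B])
    (hHA : HA = orthocenter3 B P C hBPC)
    (hHB : HB = orthocenter3 C P A hCPA)
    (hHC : HC = orthocenter3 A P B hAPB)
    (hG : G = (3 : ℝ)⁻¹ • (A + B + C))
    (hGA : GA = (3 : ℝ)⁻¹ • (A + HB + HC))
    (hGB : GB = (3 : ℝ)⁻¹ • (B + HC + HA))
    (hGC : GC = (3 : ℝ)⁻¹ • (C + HA + HB)) :
    EuclideanGeometry.Concyclic ({G, GA, GB, GC} : Set (EuclideanSpace ℝ (Fin 2))) := by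
  obtain ⟨hOAB, hOAC⟩ := circumcenter3_mem_perpBisector B P C hBPC
  obtain ⟨hOBC, hOBA⟩ := circumcenter3_mem_perpBisector C P A hCPA
  obtain ⟨hOCA, hOCB⟩ := circumcenter3_mem_perpBisector A P B hAPB
  obtain ⟨O, hA, hB, hC⟩ := exists_dist_add_sub_eq_dist finrank_euclideanSpace_fin
    (affineIndependent_iff_not_collinear_set.mp hBPC)
    (affineIndependent_iff_not_collinear_set.mp hCPA)
    (affineIndependent_iff_not_collinear_set.mp hAPB) hOAB hOAC hOBC hOBA hOCA hOCB
  subst hG hGA hGB hGC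
  exact ⟨cospherical_centroids (hHA.trans (orthocenter3_eq B P C hBPC))
    (hHB.trans (orthocenter3_eq C P A hCPA)) (hHC.trans (orthocenter3_eq A P B hAPB)) hA hB hC,
    coplanar_of_finrank_eq_two _ finrank_euclideanSpace_fin⟩

/-- The centroids `G`, `G_A`, `G_B`, `G_C` are concyclic. -/
theorem concyclic_centroids (A B C P HA HB HC G GA GB GC : EuclideanSpace ℝ (Fin 2))
    (hABC : AffineIndependent ℝ ![A, B, C])
    (hBPC : AffineIndependent ℝ ![B, P, C])
    (hCPA : AffineIndependent ℝ ![C, P, A])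
    (hAPB : AffineIndependent ℝ ![A, P, B])
    (hHA : HA = orthocenter3 B P C hBPC)
    (hHB : HB = orthocenter3 C P A hCPA)
    (hHC : HC = orthocenter3 A P B hAPB)
    (hG : G = (3 : ℝ)⁻¹ • (A + B + C))
    (hGA : GA = (3 : ℝ)⁻¹ • (A + HB + HC))
    (hGB : GB = (3 : ℝ)⁻¹ • (B + HC + HA))
    (hGC : GC = (3 : ℝ)⁻¹ • (C + HA + HB)) :
    EuclideanGeometry.Concyclic ({G, GA, GB, GC} : Set (EuclideanSpace ℝ (Fin 2))) :=
  concyclic_centroids_general A B C P HA HB HC G GA GB GC hBPC hCPA hAPB hHA hHB hHC hG hGA hGB hGC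
end

section
/- Let A, B, C be an affinely independent triple in the Euclidean plane with side lengths a = dist B C, b = dist C A, c = dist A B, semiperimeter s = (a+b+c)/2, and incenter I = (a·A + b·B + c·C)/(2s). Let N_a = ((s−a)·A + (s−b)·B + (s−c)·C)/s be the Nagel point. Let H_A, H_B, H_C be the orthocenters of triangles BIC, CIA, AIB, and assume each of the triples (A, H_B, H_C), (B, H_C, H_A), (C, H_A, H_B) is affinely independent. Then N_a is the orthocenter of triangle A H_B H_C, of triangle B H_C H_A, and of triangle C H_A H_B. -/
/-!
In homogeneous barycentric coordinates with respect to `ABC`, the orthocenter of `BIC` is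
`(a : c - a : b - a)`, and cyclically for `CIA` and `AIB`. For weights `d`, `e` summing to zero,
`⟪∑ dᵢ Aᵢ, ∑ eᵢ Aᵢ⟫ = -(a²(d₂e₃ + d₃e₂) + b²(d₃e₁ + d₁e₃) + c²(d₁e₂ + d₂e₁)) / 2`, so each
orthocenter claim becomes two polynomial identities in `a, b, c`. By cyclic symmetry it suffices
to compute `H_A` and the orthocenter of `A H_B H_C`.
-/

open EuclideanGeometry
open scoped InnerProductSpace

open Module

theorem AffineIndependent.dist_lt_dist_add_dist {V P : Type*} [NormedAddCommGroup V]
    [NormedSpace ℝ V] [StrictConvexSpace ℝ V] [MetricSpace P] [NormedAddTorsor V P] {A B C : P}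
    (h : AffineIndependent ℝ ![A, B, C]) : dist B C < dist C A + dist A B := by
  have hBAC : dist B C < dist B A + dist A C := dist_lt_dist_add_dist_iff.2 fun hw =>
    affineIndependent_iff_not_collinear_set.1 h.comm_left hw.collinear
  linarith [dist_comm A B, dist_comm A C]

theorem Affine.Triangle.mem_altitude_of_inner_eq_zero {V P : Type*} [NormedAddCommGroup V]
    [InnerProductSpace ℝ V] [MetricSpace P] [NormedAddTorsor V P] [FiniteDimensional ℝ V]
    (hV : finrank ℝ V = 2) (t : Affine.Triangle ℝ P) {i j k : Fin 3} (hij : i ≠ j) (hik : i ≠ k)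
    (hjk : j ≠ k) {p : P} (h : ⟪t.points j -ᵥ t.points k, p -ᵥ t.points i⟫_ℝ = 0) :
    p ∈ t.altitude i := by
  have hface : ({i}ᶜ : Set (Fin 3)) = {j, k} := by grind
  have hspan : affineSpan ℝ (Set.range t.points) = ⊤ :=
    t.independent.affineSpan_eq_top_iff_card_eq_finrank_add_one.2 (by simp [hV])
  rw [Affine.Simplex.altitude_def, hspan, AffineSubspace.mem_inf_iff]
  refine ⟨?_, AffineSubspace.mem_top _ _ _⟩
  rwa [AffineSubspace.mem_mk', hface, Set.image_pair, direction_affineSpan, vectorSpan_pair,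
    Submodule.mem_orthogonal_singleton_iff_inner_right]

theorem eq_orthocenter3_of_inner_eq_zero {X Y Z P : EuclideanSpace ℝ (Fin 2)}
    (h : AffineIndependent ℝ ![X, Y, Z]) (hX : ⟪Y - Z, P - X⟫_ℝ = 0) (hY : ⟪Z - X, P - Y⟫_ℝ = 0) :
    P = orthocenter3 X Y Z h :=
  Affine.Triangle.eq_orthocenter_of_forall_mem_altitude (i₁ := 0) (i₂ := 1) (by decide)
    (Affine.Triangle.mem_altitude_of_inner_eq_zero finrank_euclideanSpace_fin _
      (j := 1) (k := 2) (by decide) (by decide) (by decide) hX)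
    (Affine.Triangle.mem_altitude_of_inner_eq_zero finrank_euclideanSpace_fin _
      (j := 2) (k := 0) (by decide) (by decide) (by decide) hY)

section Barycentric

variable {V : Type*} [NormedAddCommGroup V] [InnerProductSpace ℝ V] (A B C : V)

noncomputable def baryPoint (w : Fin 3 → ℝ) : V := (∑ i, w i)⁻¹ • (w 0 • A + w 1 • B + w 2 • C)

def sideForm (a b c : ℝ) (d e : Fin 3 → ℝ) : ℝ :=
  a ^ 2 * (d 1 * e 2 + d 2 * e 1) + b ^ 2 * (d 2 * e 0 + d 0 * e 2) + c ^ 2 * (d 0 * e 1 + d 1 * e 0)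

theorem baryPoint_vec (x y z : ℝ) :
    baryPoint A B C ![x, y, z] = (x + y + z)⁻¹ • (x • A + y • B + z • C) := by
  simp [baryPoint, Fin.sum_univ_three]

theorem baryPoint_rotate (x y z : ℝ) : baryPoint B C A ![y, z, x] = baryPoint A B C ![x, y, z] := by
  rw [baryPoint_vec, baryPoint_vec]
  module

theorem baryPoint_sub_baryPoint {p q : Fin 3 → ℝ} (hp : ∑ i, p i ≠ 0) (hq : ∑ i, q i ≠ 0) :
    baryPoint A B C p - baryPoint A B C q = ((∑ i, p i) * ∑ i, q i)⁻¹ •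
      (((∑ i, q i) • p - (∑ i, p i) • q) 0 • A + ((∑ i, q i) • p - (∑ i, p i) • q) 1 • B +
        ((∑ i, q i) • p - (∑ i, p i) • q) 2 • C) := by
  simp only [baryPoint, Pi.sub_apply, Pi.smul_apply, smul_eq_mul]
  match_scalars <;> field_simp

variable {A B C} {a b c : ℝ}

theorem inner_lincomb_eq_neg_sideForm (hBC : dist B C = a) (hCA : dist C A = b)
    (hAB : dist A B = c) {d e : Fin 3 → ℝ} (hd : ∑ i, d i = 0) (he : ∑ i, e i = 0) :
    ⟪d 0 • A + d 1 • B + d 2 • C, e 0 • A + e 1 • B + e 2 • C⟫_ℝ = -sideForm a b c d e / 2 := by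
  rw [Fin.sum_univ_three] at hd he
  subst hBC hCA hAB
  simp only [sideForm, dist_eq_norm, ← real_inner_self_eq_norm_sq, inner_sub_left, inner_sub_right,
    inner_add_left, inner_add_right, real_inner_smul_left, real_inner_smul_right,
    real_inner_comm A B, real_inner_comm A C, real_inner_comm B C]
  -- the difference of the two sides is `(∑ dᵢ ‖Aᵢ‖²) (∑ eᵢ) / 2 + (∑ eᵢ ‖Aᵢ‖²) (∑ dᵢ) / 2`
  linear_combination (d 0 * ⟪A, A⟫_ℝ + d 1 * ⟪B, B⟫_ℝ + d 2 * ⟪C, C⟫_ℝ) / 2 * he +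
    (e 0 * ⟪A, A⟫_ℝ + e 1 * ⟪B, B⟫_ℝ + e 2 * ⟪C, C⟫_ℝ) / 2 * hd

theorem inner_baryPoint_sub_baryPoint (hBC : dist B C = a) (hCA : dist C A = b)
    (hAB : dist A B = c) {p q r s : Fin 3 → ℝ} (hp : ∑ i, p i ≠ 0) (hq : ∑ i, q i ≠ 0)
    (hr : ∑ i, r i ≠ 0) (hs : ∑ i, s i ≠ 0) :
    ⟪baryPoint A B C p - baryPoint A B C q, baryPoint A B C r - baryPoint A B C s⟫_ℝ =
      -(((∑ i, p i) * ∑ i, q i) * ((∑ i, r i) * ∑ i, s i))⁻¹ *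
        sideForm a b c ((∑ i, q i) • p - (∑ i, p i) • q) ((∑ i, s i) • r - (∑ i, r i) • s) / 2 := by
  rw [baryPoint_sub_baryPoint A B C hp hq, baryPoint_sub_baryPoint A B C hr hs,
    real_inner_smul_left, real_inner_smul_right, inner_lincomb_eq_neg_sideForm hBC hCA hAB]
  · ring
  all_goals simp only [Fin.sum_univ_three, Pi.sub_apply, Pi.smul_apply, smul_eq_mul]; ring

end Barycentric

section Orthocenters

variable {A B C : EuclideanSpace ℝ (Fin 2)} {a b c : ℝ}

theorem baryPoint_eq_orthocenter3 (hBC : dist B C = a) (hCA : dist C A = b) (hAB : dist A B = c)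
    {X Y Z : EuclideanSpace ℝ (Fin 2)} {x y z p : Fin 3 → ℝ}
    (hX : X = baryPoint A B C x) (hY : Y = baryPoint A B C y) (hZ : Z = baryPoint A B C z)
    (h : AffineIndependent ℝ ![X, Y, Z]) (hx : ∑ i, x i ≠ 0) (hy : ∑ i, y i ≠ 0)
    (hz : ∑ i, z i ≠ 0) (hp : ∑ i, p i ≠ 0)
    (hXalt : sideForm a b c ((∑ i, z i) • y - (∑ i, y i) • z) ((∑ i, x i) • p - (∑ i, p i) • x) = 0)
    (hYalt : sideForm a b c ((∑ i, x i) • z - (∑ i, z i) • x) ((∑ i, y i) • p - (∑ i, p i) • y) = 0) :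
    baryPoint A B C p = orthocenter3 X Y Z h := by
  subst hX hY hZ
  refine eq_orthocenter3_of_inner_eq_zero h ?_ ?_
  · rw [inner_baryPoint_sub_baryPoint hBC hCA hAB hy hz hp hx, hXalt]; ring
  · rw [inner_baryPoint_sub_baryPoint hBC hCA hAB hz hx hp hy, hYalt]; ring

theorem orthocenter3_incenter {I : EuclideanSpace ℝ (Fin 2)} (hBC : dist B C = a)
    (hCA : dist C A = b) (hAB : dist A B = c) (habc : a + b + c ≠ 0) (hA : b + c - a ≠ 0)
    (hI : I = baryPoint A B C ![a, b, c]) (h : AffineIndependent ℝ ![B, I, C]) :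
    orthocenter3 B I C h = baryPoint A B C ![a, c - a, b - a] := by
  refine (baryPoint_eq_orthocenter3 hBC hCA hAB (x := ![0, 1, 0]) (z := ![0, 0, 1])
    (by simp [baryPoint, Fin.sum_univ_three]) hI (by simp [baryPoint, Fin.sum_univ_three]) h
    (by simp [Fin.sum_univ_three]) (by simpa [Fin.sum_univ_three])
    (by simp [Fin.sum_univ_three]) (by simp [Fin.sum_univ_three]; contrapose! hA; linarith)
    ?_ ?_).symm <;>
  · simp [sideForm, Fin.sum_univ_three]
    ring

theorem nagel_eq_orthocenter3 {HB HC N : EuclideanSpace ℝ (Fin 2)} (hBC : dist B C = a)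
    (hCA : dist C A = b) (hAB : dist A B = c) (habc : a + b + c ≠ 0) (hB : c + a - b ≠ 0)
    (hC : a + b - c ≠ 0) (hHB : HB = baryPoint B C A ![b, a - b, c - b])
    (hHC : HC = baryPoint C A B ![c, b - c, a - c])
    (hN : N = baryPoint A B C ![b + c - a, c + a - b, a + b - c])
    (h : AffineIndependent ℝ ![A, HB, HC]) :
    N = orthocenter3 A HB HC h := by
  rw [baryPoint_rotate] at hHB
  rw [baryPoint_rotate, baryPoint_rotate] at hHC
  refine hN.trans (baryPoint_eq_orthocenter3 hBC hCA hAB (x := ![1, 0, 0])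
    (by simp [baryPoint, Fin.sum_univ_three]) hHB hHC h (by simp [Fin.sum_univ_three])
    (by simp [Fin.sum_univ_three]; contrapose! hB; linarith)
    (by simp [Fin.sum_univ_three]; contrapose! hC; linarith)
    (by simp [Fin.sum_univ_three]; contrapose! habc; linarith) ?_ ?_) <;>
  · simp [sideForm, Fin.sum_univ_three]
    ring

end Orthocenters

/-- The Nagel point is the common orthocenter of `A H_B H_C`, `B H_C H_A`, `C H_A H_B`. -/
theorem nagel_common_orthocenter (A B C I Na HA HB HC : EuclideanSpace ℝ (Fin 2))
    (hABC : AffineIndependent ℝ ![A, B, C])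
    (a b c s : ℝ)
    (ha : a = dist B C) (hb : b = dist C A) (hc : c = dist A B)
    (hs : s = (a + b + c) / 2)
    (hI : I = (2 * s)⁻¹ • (a • A + b • B + c • C))
    (hNa : Na = s⁻¹ • ((s - a) • A + (s - b) • B + (s - c) • C))
    (hBIC : AffineIndependent ℝ ![B, I, C])
    (hCIA : AffineIndependent ℝ ![C, I, A])
    (hAIB : AffineIndependent ℝ ![A, I, B])
    (hHA : HA = orthocenter3 B I C hBIC)
    (hHB : HB = orthocenter3 C I A hCIA)
    (hHC : HC = orthocenter3 A I B hAIB)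
    (h1 : AffineIndependent ℝ ![A, HB, HC])
    (h2 : AffineIndependent ℝ ![B, HC, HA])
    (h3 : AffineIndependent ℝ ![C, HA, HB]) :
    Na = orthocenter3 A HB HC h1 ∧ Na = orthocenter3 B HC HA h2 ∧
      Na = orthocenter3 C HA HB h3 := by
  have hBC : dist B C = a := ha.symm
  have hCA : dist C A = b := hb.symm
  have hAB : dist A B = c := hc.symm
  have hA : 0 < b + c - a := by linarith [hABC.dist_lt_dist_add_dist]
  have hB : 0 < c + a - b := by linarith [hABC.comm_left.comm_right.dist_lt_dist_add_dist]
  have hC : 0 < a + b - c := by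
    linarith [hABC.comm_left.comm_right.comm_left.comm_right.dist_lt_dist_add_dist]
  have habc : a + b + c ≠ 0 := by linarith
  have hI' : I = baryPoint A B C ![a, b, c] := by
    rw [hI, hs, baryPoint_vec]
    ring_nf
  have hNa' : Na = baryPoint A B C ![b + c - a, c + a - b, a + b - c] := by
    rw [hNa, hs, baryPoint_vec]
    match_scalars <;> field_simp <;> ring
  have hHA' : HA = baryPoint A B C ![a, c - a, b - a] :=
    hHA.trans (orthocenter3_incenter hBC hCA hAB habc hA.ne' hI' hBIC)
  have hHB' : HB = baryPoint B C A ![b, a - b, c - b] :=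
    hHB.trans (orthocenter3_incenter hCA hAB hBC (by linarith) hB.ne'
      (hI'.trans (baryPoint_rotate A B C a b c).symm) hCIA)
  have hHC' : HC = baryPoint C A B ![c, b - c, a - c] :=
    hHC.trans (orthocenter3_incenter hAB hBC hCA (by linarith) hC.ne'
      (hI'.trans ((baryPoint_rotate B C A b c a).trans (baryPoint_rotate A B C a b c)).symm) hAIB)
  exact ⟨nagel_eq_orthocenter3 hBC hCA hAB habc hB.ne' hC.ne' hHB' hHC' hNa' h1,
    nagel_eq_orthocenter3 hCA hAB hBC (by linarith) hC.ne' hA.ne' hHC' hHA'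
      (hNa'.trans (baryPoint_rotate A B C _ _ _).symm) h2,
    nagel_eq_orthocenter3 hAB hBC hCA (by linarith) hA.ne' hB.ne' hHA' hHB'
      (hNa'.trans ((baryPoint_rotate B C A _ _ _).trans (baryPoint_rotate A B C _ _ _)).symm) h3⟩
end

section
/- Let A, B, C be an affinely independent triple in the Euclidean plane with incenter I = (a·A + b·B + c·C)/(2s) (where a = dist B C, b = dist C A, c = dist A B, s = (a+b+c)/2) and orthocenter H, and let N_a = ((s−a)·A + (s−b)·B + (s−c)·C)/s be the Nagel point. Let H_A, H_B, H_C be the orthocenters of triangles BIC, CIA, AIB, let O_a, O_b, O_c be the circumcenters of triangles H_A B C, H_B C A, H_C A B respectively (each triple assumed affinely independent), and assume O_a, O_b, O_c are affinely independent with circumcenter O_f. Then N_a is the antipode of H on the circumcircle of triangle O_a O_b O_c, i.e., O_f is the midpoint of H and N_a. -/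
open EuclideanGeometry
open scoped InnerProductSpace

/-!
Let `M` be the second intersection of the line `AI` with the circumcircle, i.e. the midpoint of
the arc `BC`; it is the point with `AM / AI = (b + c) / (b + c - a)`. By the incenter–excenter
lemma `M` is the circumcenter of `BIC`, so `H_A = B + I + C - 2M`, and the circumcenter of
`H_A B C` is the reflection `O_a = B + C - M` of `M` in the midpoint of `BC`. Since
`H = A + B + C - 2O` and `N_a = A + B + C - 2I`, the vectors from `O_a` to `H` and to `N_a` are
`2(m - O)` and `2(m - I)` for the midpoint `m` of the chord `AM`; they are orthogonal because `I`
lies on `AM`. Hence `O_a`, and likewise `O_b` and `O_c`, lie on the circle with diameter `H N_a`.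
-/

section

variable {V : Type*} [NormedAddCommGroup V] [InnerProductSpace ℝ V]

theorem dist_lt_dist_add_dist_of_affineIndependent {A B C : V}
    (h : AffineIndependent ℝ ![A, B, C]) : dist B C < dist C A + dist A B := by
  rw [dist_comm C A, dist_comm A B, add_comm]
  refine (dist_lt_dist_add_dist_iff (a := B) (b := A) (c := C)).2 fun hw =>
    affineIndependent_iff_not_collinear_set.1 h ?_
  simpa only [Set.insert_comm] using hw.collinear

theorem inner_add_sub_two_smul_eq_zero_of_dist_eq {A M O I : V} {t : ℝ}
    (hOM : dist O M = dist O A) (hI : I - A = t • (M - A)) :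
    ⟪A + M - (2 : ℝ) • O, A + M - (2 : ℝ) • I⟫_ℝ = 0 := by
  rw [show A + M - (2 : ℝ) • O = -((O - A) + (O - M)) by module,
    show A + M - (2 : ℝ) • I = (1 - 2 * t) • ((O - A) - (O - M)) by
      rw [show I = A + t • (M - A) by rw [← hI]; abel]; module,
    inner_neg_left, real_inner_smul_right,
    (real_inner_add_sub_eq_zero_iff _ _).2 (by rw [← dist_eq_norm, ← dist_eq_norm, hOM]),
    mul_zero, neg_zero]

theorem mem_ofDiameter_of_inner_eq_zero {H N X : V} (h : ⟪H - X, N - X⟫_ℝ = 0) :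
    X ∈ Sphere.ofDiameter H N :=
  Sphere.angle_eq_pi_div_two_iff_mem_sphere_ofDiameter.1
    ((InnerProductGeometry.inner_eq_zero_iff_angle_eq_pi_div_two _ _).1 h)

variable {A B C I : V} {a b c : ℝ} (ha : a = dist B C) (hb : b = dist C A) (hc : c = dist A B)
  (hI : (a + b + c) • I = a • A + b • B + c • C)

include hI in
theorem incenter_sub_eq (hp : a + b + c ≠ 0) :
    I - A = (a + b + c)⁻¹ • (b • (B - A) + c • (C - A)) := by
  rw [eq_inv_smul_iff₀ hp, smul_sub, hI]
  module

include ha hb hc hI in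
theorem inner_incenter_sub (hp : a + b + c ≠ 0) :
    ⟪I - A, B - A⟫_ℝ = c * (b + c - a) / 2 ∧ ⟪I - A, C - A⟫_ℝ = b * (b + c - a) / 2 := by
  have huv : ⟪B - A, C - A⟫_ℝ = (c ^ 2 + b ^ 2 - a ^ 2) / 2 := by
    rw [real_inner_eq_norm_mul_self_add_norm_mul_self_sub_norm_sub_mul_self_div_two,
      sub_sub_sub_cancel_right, ← dist_eq_norm, ← dist_eq_norm, ← dist_eq_norm, ha, hb, hc,
      dist_comm A]
    ring
  have huu : ⟪B - A, B - A⟫_ℝ = c ^ 2 := by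
    rw [real_inner_self_eq_norm_sq, ← dist_eq_norm, dist_comm, hc]
  have hvv : ⟪C - A, C - A⟫_ℝ = b ^ 2 := by
    rw [real_inner_self_eq_norm_sq, ← dist_eq_norm, hb]
  simp only [incenter_sub_eq hI hp, real_inner_smul_left, inner_add_left, huu, hvv, huv,
    real_inner_comm (B - A) (C - A)]
  constructor <;> field_simp <;> ring

include ha hb hc hI in
theorem norm_incenter_sub_sq (hp : a + b + c ≠ 0) :
    ‖I - A‖ ^ 2 = b * c * (b + c - a) / (a + b + c) := by
  obtain ⟨hu, hv⟩ := inner_incenter_sub ha hb hc hI hp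
  rw [← real_inner_self_eq_norm_sq]
  nth_rw 2 [incenter_sub_eq hI hp]
  simp only [real_inner_smul_right, inner_add_right, hu, hv]
  field_simp
  ring

include hb hc hI in
theorem inner_sub_incenter_sub_of_dist_eq {O : V} (hB : dist O B = dist O A)
    (hC : dist O C = dist O A) (hp : a + b + c ≠ 0) :
    ⟪O - A, I - A⟫_ℝ = b * c * (b + c) / (2 * (a + b + c)) := by
  have hu : ⟪O - A, B - A⟫_ℝ = c ^ 2 / 2 := by
    rw [hc, ← vsub_eq_sub, ← vsub_eq_sub, ← AffineSubspace.mem_perpBisector_iff_inner_eq,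
      AffineSubspace.mem_perpBisector_iff_dist_eq, hB]
  have hv : ⟪O - A, C - A⟫_ℝ = b ^ 2 / 2 := by
    rw [hb, dist_comm, ← vsub_eq_sub, ← vsub_eq_sub,
      ← AffineSubspace.mem_perpBisector_iff_inner_eq, AffineSubspace.mem_perpBisector_iff_dist_eq,
      hC]
  simp only [incenter_sub_eq hI hp, real_inner_smul_right, inner_add_right, hu, hv]
  field_simp
  ring

include ha hb hc hI in
theorem dist_arcMidpoint_eq_dist_incenter (habc : a < b + c) {M : V}
    (hM : M = A + ((b + c) / (b + c - a)) • (I - A)) :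
    dist M B = dist M I ∧ dist M C = dist M I := by
  have hp : a + b + c ≠ 0 := by linarith [ha ▸ dist_nonneg (x := B) (y := C)]
  have hq : b + c - a ≠ 0 := by linarith
  obtain ⟨hu, hv⟩ := inner_incenter_sub ha hb hc hI hp
  have hx := norm_incenter_sub_sq ha hb hc hI hp
  have hMI : dist M I ^ 2 = b * c * a ^ 2 / ((a + b + c) * (b + c - a)) := by
    rw [dist_eq_norm, show M - I = ((b + c) / (b + c - a) - 1) • (I - A) by rw [hM]; module,
      norm_smul, mul_pow, Real.norm_eq_abs, sq_abs, hx]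
    field_simp
    ring
  have hMB : dist M B ^ 2 = b * c * a ^ 2 / ((a + b + c) * (b + c - a)) := by
    rw [dist_eq_norm, show M - B = ((b + c) / (b + c - a)) • (I - A) - (B - A) by rw [hM]; abel,
      norm_sub_sq_real, norm_smul, mul_pow, Real.norm_eq_abs, sq_abs, hx, real_inner_smul_left, hu,
      ← dist_eq_norm, dist_comm, ← hc]
    field_simp
    ring
  have hMC : dist M C ^ 2 = b * c * a ^ 2 / ((a + b + c) * (b + c - a)) := by
    rw [dist_eq_norm, show M - C = ((b + c) / (b + c - a)) • (I - A) - (C - A) by rw [hM]; abel,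
      norm_sub_sq_real, norm_smul, mul_pow, Real.norm_eq_abs, sq_abs, hx, real_inner_smul_left, hv,
      ← dist_eq_norm, ← hb]
    field_simp
    ring
  constructor <;> rw [← sq_eq_sq₀ dist_nonneg dist_nonneg] <;> simp only [hMI, hMB, hMC]

include ha hb hc hI in
theorem dist_center_arcMidpoint (habc : a < b + c) {M O : V}
    (hM : M = A + ((b + c) / (b + c - a)) • (I - A))
    (hB : dist O B = dist O A) (hC : dist O C = dist O A) :
    dist O M = dist O A := by
  have hp : a + b + c ≠ 0 := by linarith [ha ▸ dist_nonneg (x := B) (y := C)]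
  have hq : b + c - a ≠ 0 := by linarith
  have hx := norm_incenter_sub_sq ha hb hc hI hp
  have ho := inner_sub_incenter_sub_of_dist_eq hb hc hI hB hC hp
  rw [← sq_eq_sq₀ dist_nonneg dist_nonneg, dist_eq_norm, dist_eq_norm,
    show O - M = (O - A) - ((b + c) / (b + c - a)) • (I - A) by rw [hM]; abel,
    norm_sub_sq_real, norm_smul, mul_pow, Real.norm_eq_abs, sq_abs, hx, real_inner_smul_right, ho]
  field_simp
  ring

end

local notation "E" => EuclideanSpace ℝ (Fin 2)

theorem circumcenter3_eq_center {A B C : E} (h : AffineIndependent ℝ ![A, B, C]) {s : Sphere E}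
    (hA : A ∈ s) (hB : B ∈ s) (hC : C ∈ s) : circumcenter3 A B C h = s.center := by
  refine (Affine.Simplex.eq_circumcenter_of_dist_eq _ ?_ (r := s.radius) ?_).symm
  · rw [h.affineSpan_eq_top_iff_card_eq_finrank_add_one.2 (by simp)]
    exact AffineSubspace.mem_top _ _ _
  · intro i
    fin_cases i
    exacts [hA, hB, hC]

theorem orthocenter3_eq_sub_two_smul_circumcenter3 {A B C : E}
    (h : AffineIndependent ℝ ![A, B, C]) :
    orthocenter3 A B C h = A + B + C - (2 : ℝ) • circumcenter3 A B C h := by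
  rw [orthocenter3, Affine.Triangle.orthocenter_eq_smul_vsub_vadd_circumcenter,
    Finset.centroid_def,
    Finset.affineCombination_eq_linear_combination _ _ _ (by simp [Finset.centroidWeights])]
  simp only [Fin.sum_univ_three, Finset.centroidWeights_apply, circumcenter3, vsub_eq_sub,
    vadd_eq_add, Finset.card_univ, Fintype.card_fin, Nat.cast_ofNat, Matrix.cons_val_zero,
    Matrix.cons_val_one, Matrix.cons_val]
  module

theorem circumcenter3_orthocenter3_eq_add_sub_circumcenter3 {X Y Z : E}
    (h : AffineIndependent ℝ ![X, Y, Z])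
    (h' : AffineIndependent ℝ ![orthocenter3 X Y Z h, X, Z]) :
    circumcenter3 (orthocenter3 X Y Z h) X Z h' = X + Z - circumcenter3 X Y Z h := by
  let T : Affine.Simplex ℝ E 2 := ⟨![X, Y, Z], h⟩
  obtain ⟨hX, hY, hZ⟩ : dist X (circumcenter3 X Y Z h) = T.circumradius ∧
      dist Y (circumcenter3 X Y Z h) = T.circumradius ∧
      dist Z (circumcenter3 X Y Z h) = T.circumradius :=
    ⟨T.dist_circumcenter_eq_circumradius 0, T.dist_circumcenter_eq_circumradius 1,
      T.dist_circumcenter_eq_circumradius 2⟩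
  refine circumcenter3_eq_center h' (s := ⟨X + Z - circumcenter3 X Y Z h, T.circumradius⟩)
    ?_ ?_ ?_ <;> rw [mem_sphere, dist_eq_norm]
  · rw [orthocenter3_eq_sub_two_smul_circumcenter3, ← hY, dist_eq_norm]; congr 1; module
  · rw [← hZ, dist_eq_norm, norm_sub_rev]; congr 1; module
  · rw [← hX, dist_eq_norm, norm_sub_rev]; congr 1; module

theorem fuhrmann_vertex_mem_ofDiameter {A B C I H N : E} {a b c : ℝ} {s : Sphere E}
    (hABC : AffineIndependent ℝ ![A, B, C])
    (ha : a = dist B C) (hb : b = dist C A) (hc : c = dist A B)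
    (hI : (a + b + c) • I = a • A + b • B + c • C) (hA : A ∈ s) (hB : B ∈ s) (hC : C ∈ s)
    (hH : H = A + B + C - (2 : ℝ) • s.center) (hN : N = A + B + C - (2 : ℝ) • I)
    (hBIC : AffineIndependent ℝ ![B, I, C])
    (hHBC : AffineIndependent ℝ ![orthocenter3 B I C hBIC, B, C]) :
    circumcenter3 (orthocenter3 B I C hBIC) B C hHBC ∈ Sphere.ofDiameter H N := by
  have habc : a < b + c := by
    rw [ha, hb, hc]
    exact dist_lt_dist_add_dist_of_affineIndependent hABC
  set k := (b + c) / (b + c - a)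
  set M := A + k • (I - A) with hM
  obtain ⟨hMB, hMC⟩ := dist_arcMidpoint_eq_dist_incenter ha hb hc hI habc hM
  have hOM : dist s.center M = dist s.center A :=
    dist_center_arcMidpoint ha hb hc hI habc hM ((mem_sphere'.1 hB).trans (mem_sphere'.1 hA).symm)
      ((mem_sphere'.1 hC).trans (mem_sphere'.1 hA).symm)
  have hcirc : circumcenter3 B I C hBIC = M :=
    circumcenter3_eq_center hBIC (s := ⟨M, dist M I⟩)
      (by rw [mem_sphere, dist_comm, hMB]) (by rw [mem_sphere, dist_comm])
      (by rw [mem_sphere, dist_comm, hMC])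
  rw [circumcenter3_orthocenter3_eq_add_sub_circumcenter3, hcirc]
  refine mem_ofDiameter_of_inner_eq_zero ?_
  rw [hH, hN, show A + B + C - (2 : ℝ) • s.center - (B + C - M) = A + M - (2 : ℝ) • s.center by
    abel, show A + B + C - (2 : ℝ) • I - (B + C - M) = A + M - (2 : ℝ) • I by abel]
  refine inner_add_sub_two_smul_eq_zero_of_dist_eq hOM (t := k⁻¹) ?_
  have hk : k ≠ 0 :=
    div_ne_zero (by linarith [ha ▸ dist_nonneg (x := B) (y := C)]) (by linarith)
  rw [hM, add_sub_cancel_left, smul_smul, inv_mul_cancel₀ hk, one_smul]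

/-- The Nagel point is the antipode of `H` on the Fuhrmann circle. -/
theorem nagel_antipode_of_orthocenter
    (A B C I H Na HA HB HC Oa Ob Oc Of : EuclideanSpace ℝ (Fin 2))
    (hABC : AffineIndependent ℝ ![A, B, C])
    (a b c s : ℝ)
    (ha : a = dist B C) (hb : b = dist C A) (hc : c = dist A B)
    (hs : s = (a + b + c) / 2)
    (hI : I = (2 * s)⁻¹ • (a • A + b • B + c • C))
    (hH : H = orthocenter3 A B C hABC)
    (hNa : Na = s⁻¹ • ((s - a) • A + (s - b) • B + (s - c) • C))
    (hBIC : AffineIndependent ℝ ![B, I, C])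
    (hCIA : AffineIndependent ℝ ![C, I, A])
    (hAIB : AffineIndependent ℝ ![A, I, B])
    (hHA : HA = orthocenter3 B I C hBIC)
    (hHB : HB = orthocenter3 C I A hCIA)
    (hHC : HC = orthocenter3 A I B hAIB)
    (ha' : AffineIndependent ℝ ![HA, B, C])
    (hb' : AffineIndependent ℝ ![HB, C, A])
    (hc' : AffineIndependent ℝ ![HC, A, B])
    (hOa : Oa = circumcenter3 HA B C ha')
    (hOb : Ob = circumcenter3 HB C A hb')
    (hOc : Oc = circumcenter3 HC A B hc')
    (hF : AffineIndependent ℝ ![Oa, Ob, Oc])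
    (hOf : Of = circumcenter3 Oa Ob Oc hF) :
    Of = midpoint ℝ H Na := by
  subst hs hHA hHB hHC hOa hOb hOc hOf
  let T : Affine.Simplex ℝ E 2 := ⟨![A, B, C], hABC⟩
  have hp : a + b + c ≠ 0 := by
    linarith [dist_lt_dist_add_dist_of_affineIndependent hABC, ha ▸ dist_nonneg (x := B) (y := C)]
  have hI' : (a + b + c) • I = a • A + b • B + c • C := by rw [hI]; match_scalars <;> field_simp
  have hNa' : Na = A + B + C - (2 : ℝ) • I := by rw [hNa, hI]; match_scalars <;> field_simp
  have hH' : H = A + B + C - (2 : ℝ) • T.circumsphere.center :=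
    hH.trans (orthocenter3_eq_sub_two_smul_circumcenter3 hABC)
  have hBCA := hABC.comm_left.comm_right
  refine circumcenter3_eq_center hF (s := Sphere.ofDiameter H Na) ?_ ?_ ?_
  · exact fuhrmann_vertex_mem_ofDiameter hABC ha hb hc hI' (T.mem_circumsphere 0)
      (T.mem_circumsphere 1) (T.mem_circumsphere 2) hH' hNa' hBIC ha'
  · exact fuhrmann_vertex_mem_ofDiameter hBCA hb hc ha
      (by rw [show b + c + a = a + b + c by ring, hI']; abel) (T.mem_circumsphere 1)
      (T.mem_circumsphere 2) (T.mem_circumsphere 0) (by rw [hH']; abel) (by rw [hNa']; abel)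
      hCIA hb'
  · exact fuhrmann_vertex_mem_ofDiameter hBCA.comm_left.comm_right hc ha hb
      (by rw [show c + a + b = a + b + c by ring, hI']; abel) (T.mem_circumsphere 2)
      (T.mem_circumsphere 0) (T.mem_circumsphere 1) (by rw [hH']; abel) (by rw [hNa']; abel)
      hAIB hc'
end

section
/- Let A, B, C be an affinely independent triple in the Euclidean plane with incenter I = (a·A + b·B + c·C)/(2s) (where a = dist B C, b = dist C A, c = dist A B, s = (a+b+c)/2). Let H_A, H_B, H_C be the orthocenters of triangles BIC, CIA, AIB, let O_a, O_b, O_c be the circumcenters of triangles H_A B C, H_B C A, H_C A B respectively (each triple assumed affinely independent), and assume O_a, O_b, O_c are affinely independent. Then the orthocenter of the Fuhrmann triangle O_a O_b O_c is I. -/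
open EuclideanGeometry
open scoped InnerProductSpace

/-!
Let `M_a` be the midpoint of the arc `BC` of the circumcircle not containing `A`. It is the
circumcenter of `BIC` (incenter–excenter lemma), so by Sylvester's relation `H = P + Q + R - 2O`
the orthocenter of `BIC` is `H_A = B + I + C - 2 M_a`. The circle through `H_A`, `B`, `C` is the
reflection of the circle `BIC` in the midpoint of `BC`, hence `O_a = B + C - M_a`. A barycentric
computation then shows that `F = (O_a + O_b + O_c - I) / 2` is equidistant from `O_a`, `O_b`, `O_c`;
so `F` is the circumcenter of the Fuhrmann triangle and its orthocenter is
`O_a + O_b + O_c - 2F = I`.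
-/

theorem dist_lt_dist_add_dist_of_not_collinear {V : Type*} [NormedAddCommGroup V]
    [NormedSpace ℝ V] [StrictConvexSpace ℝ V] {A B C : V} (h : ¬Collinear ℝ {A, B, C}) :
    dist B C < dist C A + dist A B := by
  have : dist B C < dist B A + dist A C :=
    dist_lt_dist_add_dist_iff.2 fun hw => h (by simpa [Set.insert_comm] using hw.collinear)
  rwa [dist_comm B A, dist_comm A C, add_comm] at this

noncomputable section

variable {V : Type*} [NormedAddCommGroup V] [InnerProductSpace ℝ V]

theorem norm_sq_smul_add_smul_add_smul_of_sum_eq_zero (A B C : V) {x y z : ℝ}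
    (h : x + y + z = 0) :
    ‖x • A + y • B + z • C‖ ^ 2 =
      -(x * y * ‖A - B‖ ^ 2 + y * z * ‖B - C‖ ^ 2 + z * x * ‖C - A‖ ^ 2) := by
  obtain rfl : z = -x - y := by linarith
  rw [show x • A + y • B + (-x - y) • C = x • (A - C) + y • (B - C) by module,
    show A - B = (A - C) - (B - C) by abel, ← norm_neg (C - A), neg_sub, norm_add_sq_real,
    norm_sub_sq_real, norm_smul, norm_smul, real_inner_smul_left, real_inner_smul_right,
    Real.norm_eq_abs, Real.norm_eq_abs, mul_pow, mul_pow, sq_abs, sq_abs]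
  ring

/-- Barycentric coordinates `(-a² : b(b+c) : c(b+c))`: when `a b c` are the side lengths, this is
the midpoint of the arc `BC` of the circumcircle not containing `A`. -/
def arcMidpoint (A B C : V) (a b c : ℝ) : V :=
  (-a ^ 2 / ((b + c - a) * (a + b + c))) • A + (b * (b + c) / ((b + c - a) * (a + b + c))) • B +
    (c * (b + c) / ((b + c - a) * (a + b + c))) • C

def baryIncenter (A B C : V) (a b c : ℝ) : V :=
  (a / (a + b + c)) • A + (b / (a + b + c)) • B + (c / (a + b + c)) • C

def fuhrmannVertex (A B C : V) (a b c : ℝ) : V := B + C - arcMidpoint A B C a b c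

def fuhrmannCenter (A B C : V) (a b c : ℝ) : V :=
  (2 : ℝ)⁻¹ • (fuhrmannVertex A B C a b c + fuhrmannVertex B C A b c a +
    fuhrmannVertex C A B c a b - baryIncenter A B C a b c)

theorem baryIncenter_rotate (A B C : V) (a b c : ℝ) :
    baryIncenter B C A b c a = baryIncenter A B C a b c := by
  unfold baryIncenter
  module

theorem fuhrmannCenter_rotate (A B C : V) (a b c : ℝ) :
    fuhrmannCenter B C A b c a = fuhrmannCenter A B C a b c := by
  unfold fuhrmannCenter
  rw [baryIncenter_rotate]
  congr 1
  abel

variable {A B C : V} {a b c : ℝ}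

theorem dist_sq_eq_of_sub_eq (hBC : dist B C = a) (hCA : dist C A = b) (hAB : dist A B = c)
    {X Y : V} {x y z : ℝ} (hxyz : x + y + z = 0) (h : X - Y = x • A + y • B + z • C) :
    dist X Y ^ 2 = -(x * y * c ^ 2 + y * z * a ^ 2 + z * x * b ^ 2) := by
  rw [dist_eq_norm, h, norm_sq_smul_add_smul_add_smul_of_sum_eq_zero A B C hxyz, ← dist_eq_norm,
    ← dist_eq_norm, ← dist_eq_norm, hBC, hCA, hAB]

theorem dist_arcMidpoint_sq (hBC : dist B C = a) (hCA : dist C A = b) (hAB : dist A B = c)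
    (ha : a < b + c) :
    let r := a ^ 2 * b * c / ((a + b + c) * (b + c - a))
    dist B (arcMidpoint A B C a b c) ^ 2 = r ∧ dist C (arcMidpoint A B C a b c) ^ 2 = r ∧
      dist (baryIncenter A B C a b c) (arcMidpoint A B C a b c) ^ 2 = r := by
  have : 0 ≤ a := hBC ▸ dist_nonneg
  have hx : b + c - a ≠ 0 := by linarith
  have hp : a + b + c ≠ 0 := by linarith
  refine ⟨?_, ?_, ?_⟩
  · rw [dist_sq_eq_of_sub_eq hBC hCA hAB (x := a ^ 2 / ((b + c - a) * (a + b + c)))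
      (y := 1 - b * (b + c) / ((b + c - a) * (a + b + c)))
      (z := -(c * (b + c) / ((b + c - a) * (a + b + c)))) (by field_simp; ring)
      (by unfold arcMidpoint; module)]
    field_simp
    ring
  · rw [dist_sq_eq_of_sub_eq hBC hCA hAB (x := a ^ 2 / ((b + c - a) * (a + b + c)))
      (y := -(b * (b + c) / ((b + c - a) * (a + b + c))))
      (z := 1 - c * (b + c) / ((b + c - a) * (a + b + c))) (by field_simp; ring)
      (by unfold arcMidpoint; module)]
    field_simp
    ring
  · rw [dist_sq_eq_of_sub_eq hBC hCA hAB
      (x := a / (a + b + c) + a ^ 2 / ((b + c - a) * (a + b + c)))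
      (y := b / (a + b + c) - b * (b + c) / ((b + c - a) * (a + b + c)))
      (z := c / (a + b + c) - c * (b + c) / ((b + c - a) * (a + b + c))) (by field_simp; ring)
      (by unfold arcMidpoint baryIncenter; module)]
    field_simp
    ring

/-- The right-hand side is Euler's `OI² = R² - 2Rr`. -/
theorem dist_fuhrmannVertex_fuhrmannCenter_sq (hBC : dist B C = a) (hCA : dist C A = b)
    (hAB : dist A B = c) (ha : a < b + c) (hb : b < c + a) (hc : c < a + b) :
    dist (fuhrmannVertex A B C a b c) (fuhrmannCenter A B C a b c) ^ 2 =
      a * b * c * (a * b * c - (b + c - a) * (c + a - b) * (a + b - c)) /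
        ((a + b + c) * (b + c - a) * (c + a - b) * (a + b - c)) := by
  have hx : b + c - a ≠ 0 := by linarith
  have hy : c + a - b ≠ 0 := by linarith
  have hz : a + b - c ≠ 0 := by linarith
  have hp : a + b + c ≠ 0 := by linarith
  set p := a + b + c
  -- the coefficients of `O_a - F = -(2A + M_a - M_b - M_c - I) / 2`
  rw [dist_sq_eq_of_sub_eq hBC hCA hAB
    (x := -(2 - a ^ 2 / ((b + c - a) * p) - a * (c + a) / ((c + a - b) * p) -
      a * (a + b) / ((a + b - c) * p) - a / p) / 2)
    (y := -(b * (b + c) / ((b + c - a) * p) + b ^ 2 / ((c + a - b) * p) -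
      b * (a + b) / ((a + b - c) * p) - b / p) / 2)
    (z := -(c * (b + c) / ((b + c - a) * p) - c * (c + a) / ((c + a - b) * p) +
      c ^ 2 / ((a + b - c) * p) - c / p) / 2) (by field_simp; ring)
    (by unfold fuhrmannCenter fuhrmannVertex arcMidpoint baryIncenter; module)]
  field_simp
  ring

end

section

variable {P Q R X : EuclideanSpace ℝ (Fin 2)}

theorem circumcenter3_eq_of_dist_eq (h : AffineIndependent ℝ ![P, Q, R])
    (hQ : dist Q X = dist P X) (hR : dist R X = dist P X) : circumcenter3 P Q R h = X := by
  refine (Affine.Simplex.eq_circumcenter_of_dist_eq _ ?_ (r := dist P X) ?_).symm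
  · rw [h.affineSpan_eq_top_iff_card_eq_finrank_add_one.mpr (by simp)]
    exact AffineSubspace.mem_top _ _ _
  · intro i
    fin_cases i <;> simp [hQ, hR]

theorem dist_circumcenter3 (h : AffineIndependent ℝ ![P, Q, R]) :
    dist Q (circumcenter3 P Q R h) = dist P (circumcenter3 P Q R h) ∧
      dist R (circumcenter3 P Q R h) = dist P (circumcenter3 P Q R h) := by
  have hr := (⟨![P, Q, R], h⟩ : Affine.Triangle ℝ _).dist_circumcenter_eq_circumradius
  exact ⟨(hr 1).trans (hr 0).symm, (hr 2).trans (hr 0).symm⟩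

theorem orthocenter3_eq_add_sub_two_smul_circumcenter3 (h : AffineIndependent ℝ ![P, Q, R]) :
    orthocenter3 P Q R h = P + Q + R - (2 : ℝ) • circumcenter3 P Q R h := by
  have sylvester : orthocenter3 P Q R h - circumcenter3 P Q R h =
      (P - circumcenter3 P Q R h) + (Q - circumcenter3 P Q R h) + (R - circumcenter3 P Q R h) := by
    have := Affine.Triangle.orthocenter_vsub_circumcenter_eq_sum_vsub ⟨![P, Q, R], h⟩
    rwa [Fin.sum_univ_three] at this
  rw [sub_eq_iff_eq_add.mp sylvester]
  module

/-- The circle through `H`, `P`, `R` is the image of the circumcircle of `PQR` under the point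
reflection in the midpoint of `PR`. -/
theorem circumcenter3_eq_add_sub_circumcenter3 {H : EuclideanSpace ℝ (Fin 2)}
    (h : AffineIndependent ℝ ![P, Q, R]) (hH : H = orthocenter3 P Q R h)
    (h' : AffineIndependent ℝ ![H, P, R]) :
    circumcenter3 H P R h' = P + R - circumcenter3 P Q R h := by
  obtain ⟨hQ, hR⟩ := dist_circumcenter3 h
  rw [orthocenter3_eq_add_sub_two_smul_circumcenter3] at hH
  generalize circumcenter3 P Q R h = O at hQ hR hH ⊢
  subst hH
  have hHY : dist (P + Q + R - (2 : ℝ) • O) (P + R - O) = dist Q O := by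
    rw [dist_eq_norm, dist_eq_norm]
    congr 1
    module
  have hPY : dist P (P + R - O) = dist R O := by
    rw [dist_eq_norm, dist_eq_norm']
    congr 1
    abel
  have hRY : dist R (P + R - O) = dist P O := by
    rw [dist_eq_norm, dist_eq_norm']
    congr 1
    abel
  exact circumcenter3_eq_of_dist_eq h' (by rw [hPY, hHY, hQ, hR]) (by rw [hRY, hHY, hQ])

variable {A B C I : EuclideanSpace ℝ (Fin 2)} {a b c : ℝ}

theorem circumcenter3_eq_arcMidpoint (hBC : dist B C = a) (hCA : dist C A = b)
    (hAB : dist A B = c) (ha : a < b + c) (hI : I = baryIncenter A B C a b c)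
    (h : AffineIndependent ℝ ![B, I, C]) : circumcenter3 B I C h = arcMidpoint A B C a b c := by
  obtain ⟨hB, hC, hI'⟩ := dist_arcMidpoint_sq hBC hCA hAB ha
  subst hI
  exact circumcenter3_eq_of_dist_eq h ((sq_eq_sq₀ dist_nonneg dist_nonneg).1 (hI'.trans hB.symm))
    ((sq_eq_sq₀ dist_nonneg dist_nonneg).1 (hC.trans hB.symm))

theorem orthocenter3_fuhrmannVertex (hBC : dist B C = a) (hCA : dist C A = b)
    (hAB : dist A B = c) (ha : a < b + c) (hb : b < c + a) (hc : c < a + b)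
    (h : AffineIndependent ℝ
      ![fuhrmannVertex A B C a b c, fuhrmannVertex B C A b c a, fuhrmannVertex C A B c a b]) :
    orthocenter3 _ _ _ h = baryIncenter A B C a b c := by
  have hA := dist_fuhrmannVertex_fuhrmannCenter_sq hBC hCA hAB ha hb hc
  have hB := dist_fuhrmannVertex_fuhrmannCenter_sq hCA hAB hBC hb hc ha
  have hC := dist_fuhrmannVertex_fuhrmannCenter_sq hAB hBC hCA hc ha hb
  rw [fuhrmannCenter_rotate] at hB
  rw [← fuhrmannCenter_rotate C A B c a b] at hC
  have hO : circumcenter3 _ _ _ h = fuhrmannCenter A B C a b c :=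
    circumcenter3_eq_of_dist_eq h
      ((sq_eq_sq₀ dist_nonneg dist_nonneg).1 (by rw [hB, hA]; ring))
      ((sq_eq_sq₀ dist_nonneg dist_nonneg).1 (by rw [hC, hA]; ring))
  rw [orthocenter3_eq_add_sub_two_smul_circumcenter3, hO]
  unfold fuhrmannCenter
  module

end

/-- The orthocenter of the Fuhrmann triangle is the incenter `I`. -/
theorem fuhrmann_orthocenter (A B C I HA HB HC Oa Ob Oc : EuclideanSpace ℝ (Fin 2))
    (hABC : AffineIndependent ℝ ![A, B, C])
    (a b c s : ℝ)
    (ha : a = dist B C) (hb : b = dist C A) (hc : c = dist A B)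
    (hs : s = (a + b + c) / 2)
    (hI : I = (2 * s)⁻¹ • (a • A + b • B + c • C))
    (hBIC : AffineIndependent ℝ ![B, I, C])
    (hCIA : AffineIndependent ℝ ![C, I, A])
    (hAIB : AffineIndependent ℝ ![A, I, B])
    (hHA : HA = orthocenter3 B I C hBIC)
    (hHB : HB = orthocenter3 C I A hCIA)
    (hHC : HC = orthocenter3 A I B hAIB)
    (ha' : AffineIndependent ℝ ![HA, B, C])
    (hb' : AffineIndependent ℝ ![HB, C, A])
    (hc' : AffineIndependent ℝ ![HC, A, B])
    (hOa : Oa = circumcenter3 HA B C ha')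
    (hOb : Ob = circumcenter3 HB C A hb')
    (hOc : Oc = circumcenter3 HC A B hc')
    (hF : AffineIndependent ℝ ![Oa, Ob, Oc]) :
    orthocenter3 Oa Ob Oc hF = I := by
  have hABC' := affineIndependent_iff_not_collinear_set.1 hABC
  have ha₁ : a < b + c := by
    rw [ha, hb, hc]
    exact dist_lt_dist_add_dist_of_not_collinear hABC'
  have hb₁ : b < c + a := by
    rw [ha, hb, hc]
    exact dist_lt_dist_add_dist_of_not_collinear (by rwa [Set.insert_comm, Set.pair_comm] at hABC')
  have hc₁ : c < a + b := by
    rw [ha, hb, hc]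
    exact dist_lt_dist_add_dist_of_not_collinear (by rwa [Set.pair_comm, Set.insert_comm] at hABC')
  have hIA : I = baryIncenter A B C a b c := by
    rw [hI, hs]
    unfold baryIncenter
    module
  have hIB : I = baryIncenter B C A b c a := hIA.trans (baryIncenter_rotate A B C a b c).symm
  have hIC : I = baryIncenter C A B c a b := hIB.trans (baryIncenter_rotate B C A b c a).symm
  have hOa' : Oa = fuhrmannVertex A B C a b c := by
    rw [hOa, circumcenter3_eq_add_sub_circumcenter3 hBIC hHA,
      circumcenter3_eq_arcMidpoint ha.symm hb.symm hc.symm ha₁ hIA, fuhrmannVertex]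
  have hOb' : Ob = fuhrmannVertex B C A b c a := by
    rw [hOb, circumcenter3_eq_add_sub_circumcenter3 hCIA hHB,
      circumcenter3_eq_arcMidpoint hb.symm hc.symm ha.symm hb₁ hIB, fuhrmannVertex]
  have hOc' : Oc = fuhrmannVertex C A B c a b := by
    rw [hOc, circumcenter3_eq_add_sub_circumcenter3 hAIB hHC,
      circumcenter3_eq_arcMidpoint hc.symm ha.symm hb.symm hc₁ hIC, fuhrmannVertex]
  subst hOa' hOb' hOc'
  rw [orthocenter3_fuhrmannVertex ha.symm hb.symm hc.symm ha₁ hb₁ hc₁, hIA]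
end
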